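/- Let Φ be an m×k matrix, V a p×m matrix such that VΦ has full column rank, and define the V-dual Ψ_V := (VΦ)†V. Then Ψ_V is a left inverse of Φ, and for any m×m matrix H, ‖Ψ_V H‖_{∞→2} ≤ √p · ‖VH‖_{∞→∞} / σ_min(VΦ). -/

import Mathlib

open Matrix MeasureTheory Finset
noncomputable section

/-- Euclidean norm of a vector. -/
def norm2 {ι : Type*} [Fintype ι] (v : ι → ℝ) : ℝ := Real.sqrt (∑ i, (v i)^2)
/-- Sup norm of a vector. -/
def normInf {ι : Type*} (v : ι → ℝ) : ℝ := sSup {t | ∃ i, t = |v i|}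
/-- ℓ∞ → ℓ2 operator norm. -/
def normInfTo2 {ι κ : Type*} [Fintype ι] [Fintype κ] (A : Matrix κ ι ℝ) : ℝ :=
  sSup {t | ∃ v : ι → ℝ, (∀ j, |v j| ≤ 1) ∧ t = norm2 (A.mulVec v)}
/-- ℓ2 → ℓ2 (spectral) operator norm. -/
def norm2To2 {ι κ : Type*} [Fintype ι] [Fintype κ] (A : Matrix κ ι ℝ) : ℝ :=
  sSup {t | ∃ v : ι → ℝ, norm2 v ≤ 1 ∧ t = norm2 (A.mulVec v)}
/-- Smallest singular value. -/
def sigmaMin {ι κ : Type*} [Fintype ι] [Fintype κ] (A : Matrix κ ι ℝ) : ℝ :=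
  sInf {t | ∃ v : ι → ℝ, norm2 v = 1 ∧ t = norm2 (A.mulVec v)}
/-- ℓ∞ → ℓ∞ operator norm (max absolute row sum). -/
def normInfInf {ι κ : Type*} [Fintype ι] (A : Matrix κ ι ℝ) : ℝ :=
  sSup {t | ∃ i, t = ∑ j, |A i j|}
/-- The alphabet 𝒜_{L,δ}: L points, spacing 2δ, symmetric about 0. -/
def alphabet (L : ℕ) (δ : ℝ) : Set ℝ := {w | ∃ j : Fin L, w = (2*(j:ℝ) - (L:ℝ) + 1) * δ}
/-- Pseudoinverse of a full-column-rank matrix: A† = (AᵀA)⁻¹Aᵀ. -/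
def pinv {ι : Type*} [Fintype ι] {k : ℕ} (A : Matrix ι (Fin k) ℝ) : Matrix (Fin k) ι ℝ :=
  (Aᵀ*A)⁻¹ * Aᵀ

/-!
Ψ_V Φ = (VΦ)†(VΦ) = 1. For the bound take ‖v‖_∞ ≤ 1 and w = VHv, so that
‖w‖₂ ≤ √p ‖w‖_∞ ≤ √p ‖VH‖_{∞→∞}, and put u = (VΦ)† w = Ψ_V H v. Then
σ_min(VΦ) ‖u‖₂ ≤ ‖VΦ u‖₂ = ‖P w‖₂ ≤ ‖w‖₂, because P = VΦ (VΦ)† is self-adjoint and idempotent,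
hence an orthogonal projection of spectral norm at most 1. Dividing by σ_min(VΦ) is legitimate
since the left inverse gives ‖x‖₂ ≤ ‖(VΦ)†‖ ‖VΦ x‖₂, so σ_min(VΦ) ≥ 1 / ‖(VΦ)†‖ > 0.
-/

open scoped Matrix.Norms.L2Operator

section Norm2

variable {ι κ : Type*} [Fintype ι] [Fintype κ]

lemma norm2_nonneg (v : ι → ℝ) : 0 ≤ norm2 v := Real.sqrt_nonneg _

lemma norm2_eq_norm_toLp (v : ι → ℝ) :
    norm2 v = ‖(WithLp.toLp 2 v : EuclideanSpace ℝ ι)‖ := by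
  simp [norm2, EuclideanSpace.norm_eq]

lemma norm2_mulVec_le [DecidableEq ι] (A : Matrix κ ι ℝ) (v : ι → ℝ) :
    norm2 (A *ᵥ v) ≤ ‖A‖ * norm2 v := by
  simpa [norm2_eq_norm_toLp] using A.l2_opNorm_mulVec (WithLp.toLp 2 v)

lemma norm2_smul (c : ℝ) (v : ι → ℝ) : norm2 (c • v) = |c| * norm2 v := by
  simp [norm2_eq_norm_toLp, norm_smul]

lemma norm2_le_sqrt_card_mul {v : ι → ℝ} {c : ℝ} (h : ∀ i, |v i| ≤ c) :
    norm2 v ≤ √(Fintype.card ι) * c := by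
  rcases isEmpty_or_nonempty ι with _ | ⟨⟨i⟩⟩
  · simp [norm2]
  have hc : 0 ≤ c := (abs_nonneg _).trans (h i)
  calc norm2 v ≤ √(∑ _i : ι, c ^ 2) :=
        Real.sqrt_le_sqrt <| sum_le_sum fun i _ => sq_le_sq' (abs_le.mp (h i)).1 (abs_le.mp (h i)).2
    _ = √(Fintype.card ι) * c := by
        rw [sum_const, card_univ, nsmul_eq_mul, Real.sqrt_mul (Nat.cast_nonneg _), Real.sqrt_sq hc]

end Norm2

section Pinv

variable {ι : Type*} [Fintype ι] {k : ℕ} {A : Matrix ι (Fin k) ℝ}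

lemma pinv_mul_self (hA : IsUnit (Aᵀ * A).det) : pinv A * A = 1 := by
  rw [pinv, Matrix.mul_assoc, Matrix.nonsing_inv_mul _ hA]

lemma isStarProjection_mul_pinv (hA : IsUnit (Aᵀ * A).det) : IsStarProjection (A * pinv A) := by
  refine ⟨?_, ?_⟩
  · change A * pinv A * (A * pinv A) = A * pinv A
    rw [Matrix.mul_assoc, ← Matrix.mul_assoc (pinv A), pinv_mul_self hA, Matrix.one_mul]
  · rw [IsSelfAdjoint, Matrix.star_eq_conjTranspose, conjTranspose_eq_transpose_of_trivial, pinv,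
      transpose_mul, transpose_mul, transpose_nonsing_inv, transpose_mul, transpose_transpose,
      Matrix.mul_assoc]

lemma norm2_mul_pinv_mulVec_le (hA : IsUnit (Aᵀ * A).det) (w : ι → ℝ) :
    norm2 ((A * pinv A) *ᵥ w) ≤ norm2 w := by
  classical
  exact (norm2_mulVec_le _ w).trans <|
    mul_le_of_le_one_left (norm2_nonneg w) (isStarProjection_mul_pinv hA).norm_le

end Pinv

section SigmaMin

variable {ι κ : Type*} [Fintype ι] [Fintype κ]

lemma sigmaMin_nonneg (A : Matrix κ ι ℝ) : 0 ≤ sigmaMin A :=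
  Real.sInf_nonneg <| by rintro t ⟨v, -, rfl⟩; exact norm2_nonneg _

lemma sigmaMin_mul_norm2_le (A : Matrix κ ι ℝ) (u : ι → ℝ) :
    sigmaMin A * norm2 u ≤ norm2 (A *ᵥ u) := by
  rcases (norm2_nonneg u).eq_or_lt with hu | hu
  · rw [← hu, mul_zero]; exact norm2_nonneg _
  have hunit : norm2 ((norm2 u)⁻¹ • u) = 1 := by
    rw [norm2_smul, abs_of_pos (inv_pos.mpr hu), inv_mul_cancel₀ hu.ne']
  have hle : sigmaMin A ≤ (norm2 u)⁻¹ * norm2 (A *ᵥ u) := by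
    rw [← abs_of_pos (inv_pos.mpr hu), ← norm2_smul, ← mulVec_smul]
    exact csInf_le ⟨0, by rintro t ⟨v, -, rfl⟩; exact norm2_nonneg _⟩ ⟨_, hunit, rfl⟩
  rwa [← le_div_iff₀ hu, div_eq_inv_mul]

lemma sigmaMin_pos_of_mul_eq_one [DecidableEq ι] [Nonempty ι] {A : Matrix κ ι ℝ}
    {B : Matrix ι κ ℝ} (hBA : B * A = 1) : 0 < sigmaMin A := by
  classical
  have hbound : ∀ v : ι → ℝ, norm2 v = 1 → 1 ≤ ‖B‖ * norm2 (A *ᵥ v) := fun v hv => by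
    simpa [hv, mulVec_mulVec, hBA] using norm2_mulVec_le B (A *ᵥ v)
  obtain ⟨i⟩ := ‹Nonempty ι›
  have hunit : norm2 (Pi.single i 1 : ι → ℝ) = 1 := by simp [norm2, Pi.single_apply]
  have hB : 0 < ‖B‖ := by
    by_contra! h
    linarith [hbound _ hunit, mul_nonpos_of_nonpos_of_nonneg h (norm2_nonneg (A *ᵥ Pi.single i 1))]
  refine (inv_pos.mpr hB).trans_le (le_csInf ⟨_, _, hunit, rfl⟩ ?_)
  rintro t ⟨v, hv, rfl⟩
  rw [inv_le_iff_one_le_mul₀' hB]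
  exact hbound v hv

lemma norm2_le_norm2_mulVec_div_sigmaMin [DecidableEq ι] {A : Matrix κ ι ℝ} {B : Matrix ι κ ℝ}
    (hBA : B * A = 1) (u : ι → ℝ) : norm2 u ≤ norm2 (A *ᵥ u) / sigmaMin A := by
  rcases isEmpty_or_nonempty ι with _ | _
  · rw [show norm2 u = 0 by simp [norm2]]
    exact div_nonneg (norm2_nonneg _) (sigmaMin_nonneg A)
  rw [le_div_iff₀ (sigmaMin_pos_of_mul_eq_one hBA), mul_comm]
  exact sigmaMin_mul_norm2_le A u

end SigmaMin

section InfNorms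

variable {ι κ : Type*} [Fintype ι]

lemma sum_abs_le_normInfInf [Finite κ] (A : Matrix κ ι ℝ) (i : κ) :
    ∑ j, |A i j| ≤ normInfInf A := by
  refine le_csSup ?_ ⟨i, rfl⟩
  convert (Set.finite_range fun i => ∑ j, |A i j|).bddAbove using 1
  ext t; simp [eq_comm]

lemma abs_mulVec_le_normInfInf [Finite κ] (A : Matrix κ ι ℝ) {v : ι → ℝ}
    (hv : ∀ j, |v j| ≤ 1) (i : κ) : |(A *ᵥ v) i| ≤ normInfInf A :=
  calc |(A *ᵥ v) i| ≤ ∑ j, |A i j| * |v j| := by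
        simpa only [mulVec, dotProduct, abs_mul] using abs_sum_le_sum_abs (fun j => A i j * v j) univ
    _ ≤ ∑ j, |A i j| :=
        sum_le_sum fun j _ => mul_le_of_le_one_right (abs_nonneg _) (hv j)
    _ ≤ normInfInf A := sum_abs_le_normInfInf A i

lemma norm2_mulVec_le_sqrt_card_mul_normInfInf [Fintype κ] (A : Matrix κ ι ℝ) {v : ι → ℝ}
    (hv : ∀ j, |v j| ≤ 1) : norm2 (A *ᵥ v) ≤ √(Fintype.card κ) * normInfInf A :=
  norm2_le_sqrt_card_mul (abs_mulVec_le_normInfInf A hv)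

lemma normInfTo2_le [Fintype κ] {A : Matrix κ ι ℝ} {c : ℝ}
    (h : ∀ v : ι → ℝ, (∀ j, |v j| ≤ 1) → norm2 (A *ᵥ v) ≤ c) : normInfTo2 A ≤ c :=
  csSup_le ⟨_, 0, by simp, rfl⟩ <| by rintro t ⟨v, hv, rfl⟩; exact h v hv

end InfNorms

/-- the V-dual Ψ_V = (VΦ)†V is a left inverse of Φ and satisfies
    ‖Ψ_V H‖_{∞→2} ≤ √p ‖VH‖_{∞→∞} / σ_min(VΦ). -/
theorem stmt_9 (m k p : ℕ) (Φ : Matrix (Fin m) (Fin k) ℝ)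
    (V : Matrix (Fin p) (Fin m) ℝ)
    (hfull : IsUnit ((V * Φ)ᵀ * (V * Φ)).det)
    (H : Matrix (Fin m) (Fin m) ℝ) :
    (pinv (V * Φ) * V) * Φ = 1 ∧
    normInfTo2 ((pinv (V * Φ) * V) * H) ≤
      Real.sqrt p * normInfInf (V * H) / sigmaMin (V * Φ) := by
  set A := V * Φ
  have hleft : pinv A * A = 1 := pinv_mul_self hfull
  refine ⟨by rw [Matrix.mul_assoc, hleft], normInfTo2_le fun v hv => ?_⟩
  set w := (V * H) *ᵥ v
  calc norm2 ((pinv A * V * H) *ᵥ v) = norm2 (pinv A *ᵥ w) := by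
        rw [Matrix.mul_assoc, ← mulVec_mulVec]
    _ ≤ norm2 (A *ᵥ (pinv A *ᵥ w)) / sigmaMin A := norm2_le_norm2_mulVec_div_sigmaMin hleft _
    _ = norm2 ((A * pinv A) *ᵥ w) / sigmaMin A := by rw [mulVec_mulVec]
    _ ≤ norm2 w / sigmaMin A := by
        gcongr
        · exact sigmaMin_nonneg A
        · exact norm2_mul_pinv_mulVec_le hfull w
    _ ≤ √p * normInfInf (V * H) / sigmaMin A := by
        gcongr
        · exact sigmaMin_nonneg A
        · simpa using norm2_mulVec_le_sqrt_card_mul_normInfInf (V * H) hv
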